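/- Let G be a directed graph with integer edge weights in {−M, ..., M} and no negative cycles, and let C be a minimum-weight simple cycle with w(C) ≥ 0. Define t* as the minimum over all triples (a, b, c) with (b, c) ∈ E, d[a,b] < ∞, d[c,a] < ∞, and d[a,b] + w(b,c) + d[c,a] = w(C), of max(d[a,b], d[c,a]). Then t* ≤ ⌊w(C)/2⌋ and w(C) ≤ 2t* + M. -/

import Mathlib

def IsWalk {V : Type*} (E : V → V → Prop) : List V → Prop
  | [] => True
  | [_] => True
  | a :: b :: l => E a b ∧ IsWalk E (b :: l)

def IsWalkFrom {V : Type*} (E : V → V → Prop) (p : List V) (u x : V) : Prop :=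
  IsWalk E p ∧ p.head? = some u ∧ p.getLast? = some x

def wWeight {V α : Type*} [AddCommMonoid α] (w : V → V → α) : List V → α
  | a :: b :: l => w a b + wWeight w (b :: l)
  | _ => 0

def arcW {V α : Type*} [AddCommMonoid α] (w : V → V → α) (c : ℕ → V) (a k : ℕ) : α :=
  ∑ j ∈ Finset.range k, w (c (a + j)) (c (a + j + 1))

/-!
Walk around `C` from `s = v 0` and let `(v i, v (i + 1))` be the edge crossing the midpoint of
`C`, so that the arcs `v 0 ⋯ v i` and `v (i + 1) ⋯ v ℓ = v 0` both weigh at most `⌊w(C)/2⌋`.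
Shortest paths are no heavier than these arcs, and closed up by the edge they form a closed walk,
which splits into simple cycles of weight `≥ w(C) ≥ 0`. Hence the triple `(v 0, v i, v (i + 1))`
attains the sum `w(C)`, and `t* ≤ ⌊w(C)/2⌋`. Conversely, a triple attaining `t*` has
`w(C) = d[a,b] + w(b,c) + d[c,a] ≤ 2 t* + M`.
-/

section ArcWeight

variable {V α : Type*} [AddCommMonoid α] {w : V → V → α}

@[simp]
lemma arcW_zero (c : ℕ → V) (a : ℕ) : arcW w c a 0 = 0 :=
  Finset.sum_range_zero _

lemma arcW_succ (c : ℕ → V) (a k : ℕ) :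
    arcW w c a (k + 1) = arcW w c a k + w (c (a + k)) (c (a + k + 1)) :=
  Finset.sum_range_succ _ _

lemma arcW_add (c : ℕ → V) (a k l : ℕ) :
    arcW w c a (k + l) = arcW w c a k + arcW w c (a + k) l := by
  simp only [arcW, Finset.sum_range_add, add_assoc]

lemma arcW_succ' (c : ℕ → V) (a k : ℕ) :
    arcW w c a (k + 1) = w (c a) (c (a + 1)) + arcW w c (a + 1) k := by
  rw [add_comm k, arcW_add, arcW_succ, arcW_zero, zero_add, add_zero]

lemma arcW_congr {c c' : ℕ → V} {a a' k : ℕ} (h : ∀ j ≤ k, c (a + j) = c' (a' + j)) :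
    arcW w c a k = arcW w c' a' k := by
  refine Finset.sum_congr rfl fun j hj => ?_
  have hj : j < k := Finset.mem_range.mp hj
  rw [h j hj.le, add_assoc, add_assoc, h (j + 1) hj]

lemma arcW_comp_mod {c : ℕ → V} {n : ℕ} (hcl : c n = c 0) :
    arcW w (fun j => c (j % n)) 0 n = arcW w c 0 n := by
  refine arcW_congr fun j hj => ?_
  rcases hj.lt_or_eq with hj | rfl
  · rw [zero_add, Nat.mod_eq_of_lt hj]
  · rw [zero_add, Nat.mod_self, hcl]

end ArcWeight

section ClosedWalk

variable {V α : Type*} [AddCommMonoid α] {E : V → V → Prop} {w : V → V → α}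

lemma apply_succ_mod {c : ℕ → V} {n : ℕ} (hcl : c n = c 0) (j : ℕ) :
    c ((j + 1) % n) = c (j % n + 1) := by
  rcases Nat.eq_zero_or_pos n with rfl | hn
  · simp only [Nat.mod_zero]
  rw [← Nat.mod_add_mod]
  have hle : j % n + 1 ≤ n := Nat.mod_lt j hn
  rcases hle.lt_or_eq with h | h
  · rw [Nat.mod_eq_of_lt h]
  · rw [h, Nat.mod_self, hcl]

/-- Cutting the closed sub-walk `c i, …, c (i + k) = c i` out of `c 0, …, c n`. -/
def excise (c : ℕ → V) (i k : ℕ) : ℕ → V :=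
  fun t => if t ≤ i then c t else c (t + k)

@[simp]
lemma excise_zero (c : ℕ → V) (i k : ℕ) : excise c i k 0 = c 0 := if_pos (Nat.zero_le i)

lemma excise_sub {c : ℕ → V} {i k n : ℕ} (hrep : c (i + k) = c i) (hik : i + k ≤ n) :
    excise c i k (n - k) = c n := by
  unfold excise
  split_ifs with h
  · rw [show n - k = i by omega, ← hrep, show i + k = n by omega]
  · rw [Nat.sub_add_cancel (by omega)]

lemma excise_adj {c : ℕ → V} {i k n : ℕ} (hrep : c (i + k) = c i)
    (hc : ∀ j < n, E (c j) (c (j + 1))) :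
    ∀ t < n - k, E (excise c i k t) (excise c i k (t + 1)) := by
  intro t ht
  rcases lt_trichotomy t i with h | rfl | h
  · simp only [excise, if_pos h.le, if_pos (Nat.succ_le_of_lt h)]
    exact hc t (by omega)
  · simp only [excise, le_refl, if_true, if_neg (Nat.not_succ_le_self t)]
    rw [← hrep, add_right_comm]
    exact hc _ (by omega)
  · simp only [excise, if_neg (Nat.not_le_of_lt h), if_neg (by omega : ¬t + 1 ≤ i)]
    rw [add_right_comm]
    exact hc _ (by omega)

lemma arcW_excise {c : ℕ → V} {i k n : ℕ} (hrep : c (i + k) = c i) (hik : i + k ≤ n) :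
    arcW w c 0 n = arcW w c i k + arcW w (excise c i k) 0 (n - k) := by
  obtain ⟨r, rfl⟩ := Nat.exists_eq_add_of_le hik
  have hprefix : arcW w (excise c i k) 0 i = arcW w c 0 i :=
    arcW_congr fun t ht => if_pos (by omega)
  have hsuffix : arcW w (excise c i k) i r = arcW w c (i + k) r := by
    refine arcW_congr fun t _ => ?_
    rcases Nat.eq_zero_or_pos t with rfl | ht
    · simp [excise, hrep]
    · simp only [excise, if_neg (by omega : ¬i + t ≤ i)]
      rw [add_right_comm]
  rw [show i + k + r - k = i + r by omega, arcW_add, arcW_add, arcW_add, zero_add, zero_add,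
    hprefix, hsuffix]
  abel

def IsSimpleCycle (E : V → V → Prop) (u : ℕ → V) (m : ℕ) : Prop :=
  1 ≤ m ∧ (∀ j, u (j + m) = u j) ∧ (∀ j, E (u j) (u (j + 1))) ∧
    ∀ i j, i < m → j < m → u i = u j → i = j

lemma le_arcW_of_injOn [Preorder α] {W : α}
    (hcyc : ∀ m u, IsSimpleCycle E u m → W ≤ arcW w u 0 m) {c : ℕ → V} {n : ℕ} (hn : 1 ≤ n)
    (hcl : c n = c 0) (hc : ∀ j < n, E (c j) (c (j + 1)))
    (hinj : ∀ i j, i < n → j < n → c i = c j → i = j) :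
    W ≤ arcW w c 0 n := by
  rw [← arcW_comp_mod hcl]
  refine hcyc n _ ⟨hn, fun j => by simp only [Nat.add_mod_right], fun j => ?_,
    fun i j hi hj h => ?_⟩
  · simp only [apply_succ_mod hcl]
    exact hc _ (Nat.mod_lt j hn)
  · simp only [Nat.mod_eq_of_lt hi, Nat.mod_eq_of_lt hj] at h
    exact hinj i j hi hj h

-- Excising the loop at a repeated vertex leaves two shorter closed walks, so by induction a
-- closed walk splits into simple cycles, each of weight at least `W ≥ 0`.
theorem le_arcW_of_closed [PartialOrder α] [IsOrderedAddMonoid α] {W : α} (hW : 0 ≤ W)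
    (hcyc : ∀ m u, IsSimpleCycle E u m → W ≤ arcW w u 0 m) {n : ℕ} {c : ℕ → V} (hn : 1 ≤ n)
    (hcl : c n = c 0) (hc : ∀ j < n, E (c j) (c (j + 1))) : W ≤ arcW w c 0 n := by
  induction n using Nat.strong_induction_on generalizing c with
  | _ n ih =>
  by_cases hinj : ∀ i j, i < n → j < n → c i = c j → i = j
  · exact le_arcW_of_injOn hcyc hn hcl hc hinj
  obtain ⟨i, j, hij, hjn, hrep⟩ : ∃ i j, i < j ∧ j < n ∧ c j = c i := by
    push Not at hinj
    obtain ⟨i, j, hi, hj, h, hne⟩ := hinj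
    rcases hne.lt_or_gt with hlt | hlt
    exacts [⟨i, j, hlt, hj, h.symm⟩, ⟨j, i, hlt, hi, h⟩]
  obtain ⟨k, rfl⟩ := Nat.exists_eq_add_of_le hij.le
  have hinner : W ≤ arcW w c i k := by
    rw [arcW_congr (c' := fun t => c (i + t)) (a' := 0) fun t _ => by rw [zero_add]]
    exact ih k (by omega) (by omega) (by simpa using hrep) fun t ht => hc (i + t) (by omega)
  have houter : W ≤ arcW w (excise c i k) 0 (n - k) :=
    ih (n - k) (by omega) (by omega) (by rw [excise_sub hrep (by omega), excise_zero, hcl])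
      (excise_adj hrep hc)
  rw [arcW_excise hrep (by omega)]
  calc W ≤ W + W := le_add_of_nonneg_left hW
    _ ≤ _ := add_le_add hinner houter

end ClosedWalk

section Walks

variable {V α : Type*} {E : V → V → Prop}

lemma isWalk_iff_getD (d : V) :
    ∀ {p : List V}, IsWalk E p ↔ ∀ j, j + 1 < p.length → E (p.getD j d) (p.getD (j + 1) d)
  | [] => by simp [IsWalk]
  | [_] => by simp [IsWalk]
  | a :: b :: l => by
    rw [IsWalk, isWalk_iff_getD d]
    constructor
    · rintro ⟨hab, hl⟩ (_ | j) hj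
      exacts [hab, hl j (by simpa using hj)]
    · intro h
      exact ⟨h 0 (by simp), fun j hj => h (j + 1) (by simpa using hj)⟩

lemma wWeight_eq_arcW_getD [AddCommMonoid α] (w : V → V → α) (d : V) :
    ∀ p : List V, wWeight w p = arcW w (p.getD · d) 0 (p.length - 1)
  | [] => by simp [wWeight]
  | [_] => by simp [wWeight]
  | a :: b :: l => by
    rw [wWeight, wWeight_eq_arcW_getD w d (b :: l)]
    show _ = arcW w _ 0 (l.length + 1)
    rw [arcW_succ']
    exact congrArg _ (arcW_congr fun j _ => by rw [zero_add, add_comm, List.getD_cons_succ])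

lemma IsWalk.append {x y : V} (hxy : E x y) :
    ∀ {p q : List V}, IsWalk E p → IsWalk E q → p.getLast? = some x → q.head? = some y →
      IsWalk E (p ++ q)
  | [_], _ :: _, _, hq, hx, hy => by
    simp only [List.getLast?_singleton, List.head?_cons, Option.some.injEq] at hx hy
    subst hx hy
    exact ⟨hxy, hq⟩
  | _ :: b :: l, q, ⟨hab, hp⟩, hq, hx, hy =>
    ⟨hab, IsWalk.append hxy hp hq (by rwa [List.getLast?_cons_cons] at hx) hy⟩

lemma wWeight_append [AddCommMonoid α] (w : V → V → α) {x y : V} :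
    ∀ {p q : List V}, p.getLast? = some x → q.head? = some y →
      wWeight w (p ++ q) = wWeight w p + w x y + wWeight w q
  | [_], _ :: _, hx, hy => by
    simp only [List.getLast?_singleton, List.head?_cons, Option.some.injEq] at hx hy
    subst hx hy
    simp [wWeight]
  | a :: b :: l, q, hx, hy => by
    rw [List.getLast?_cons_cons] at hx
    rw [List.cons_append, List.cons_append, wWeight, ← List.cons_append,
      wWeight_append w hx hy, wWeight, add_assoc, add_assoc, add_assoc]

lemma IsWalkFrom.append {p q : List V} {u x y z : V} (hp : IsWalkFrom E p u x)
    (hq : IsWalkFrom E q y z) (hxy : E x y) : IsWalkFrom E (p ++ q) u z :=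
  ⟨hp.1.append hxy hq.1 hp.2.2 hq.2.1, by simp [List.head?_append, hp.2.1],
    by simp [List.getLast?_append, hq.2.2]⟩

theorem le_wWeight_add_wWeight [AddCommMonoid α] [PartialOrder α] [IsOrderedAddMonoid α]
    {w : V → V → α} {W : α} (hW : 0 ≤ W) (hcyc : ∀ m u, IsSimpleCycle E u m → W ≤ arcW w u 0 m)
    {p q : List V} {s x y : V} (hp : IsWalkFrom E p s x) (hq : IsWalkFrom E q y s) (hxy : E x y) :
    W ≤ wWeight w p + w x y + wWeight w q := by
  have hlen : 2 ≤ (p ++ q).length := by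
    have := List.length_pos_of_mem (List.mem_of_head? hp.2.1)
    have := List.length_pos_of_mem (List.mem_of_head? hq.2.1)
    simp only [List.length_append]
    omega
  obtain ⟨hwalk, hhead, hlast⟩ := hp.append hq hxy
  rw [← wWeight_append w hp.2.2 hq.2.1, wWeight_eq_arcW_getD w s]
  refine le_arcW_of_closed hW hcyc (by omega) ?_
    fun j hj => (isWalk_iff_getD s).1 hwalk j (by omega)
  rw [List.getD_eq_getElem?_getD, ← List.getLast?_eq_getElem?, hlast,
    List.getD_eq_getElem?_getD, ← List.head?_eq_getElem?, hhead]

def arcWalk (c : ℕ → V) (a k : ℕ) : List V :=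
  (List.range (k + 1)).map fun j => c (a + j)

lemma arcWalk_getD (c : ℕ → V) {a k j : ℕ} (hj : j ≤ k) (d : V) :
    (arcWalk c a k).getD j d = c (a + j) := by
  simp [arcWalk, List.getD_eq_getElem?_getD, Nat.lt_succ_of_le hj]

lemma isWalkFrom_arcWalk {c : ℕ → V} (hc : ∀ j, E (c j) (c (j + 1))) (a k : ℕ) :
    IsWalkFrom E (arcWalk c a k) (c a) (c (a + k)) := by
  refine ⟨(isWalk_iff_getD (c a)).2 fun j hj => ?_, by simp [arcWalk, List.range_succ_eq_map],
    by simp [arcWalk, List.range_succ]⟩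
  simp only [arcWalk, List.length_map, List.length_range] at hj
  rw [arcWalk_getD c (by omega), arcWalk_getD c (by omega), ← add_assoc]
  exact hc _

lemma wWeight_arcWalk [AddCommMonoid α] (w : V → V → α) (c : ℕ → V) (a k : ℕ) :
    wWeight w (arcWalk c a k) = arcW w c a k := by
  rw [wWeight_eq_arcW_getD w (c a)]
  simp only [arcWalk, List.length_map, List.length_range, Nat.add_sub_cancel]
  exact arcW_congr fun j hj => by rw [zero_add]; exact arcWalk_getD c hj _

lemma exists_walk_dist_eq [AddCommMonoid α] [Preorder α] {w : V → V → α}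
    {d : V → V → WithTop α} (hdle : ∀ u x p, IsWalkFrom E p u x → d u x ≤ (wWeight w p : α))
    (hdach : ∀ u x, (∃ p, IsWalkFrom E p u x) →
      ∃ p, IsWalkFrom E p u x ∧ d u x = (wWeight w p : α))
    {p : List V} {u x : V} (hp : IsWalkFrom E p u x) :
    ∃ P, IsWalkFrom E P u x ∧ d u x = (wWeight w P : α) ∧ wWeight w P ≤ wWeight w p := by
  obtain ⟨P, hP, hd⟩ := hdach u x ⟨p, hp⟩
  exact ⟨P, hP, hd, WithTop.coe_le_coe.1 (hd ▸ hdle u x p hp)⟩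

end Walks

lemma exists_last_le {α : Type*} [LinearOrder α] (f : ℕ → α) {T : α} (h0 : f 0 ≤ T) {ℓ : ℕ}
    (hℓ : 1 ≤ ℓ) : ∃ i < ℓ, f i ≤ T ∧ (i + 1 = ℓ ∨ T < f (i + 1)) := by
  induction ℓ, hℓ using Nat.le_induction with
  | base => exact ⟨0, one_pos, h0, Or.inl rfl⟩
  | succ ℓ _ ih =>
    obtain ⟨i, hiℓ, hi, rfl | hlt⟩ := ih
    · rcases le_or_gt (f (i + 1)) T with hle | hlt
      · exact ⟨i + 1, Nat.lt_succ_self _, hle, Or.inl rfl⟩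
      · exact ⟨i, by omega, hi, Or.inr hlt⟩
    · exact ⟨i, by omega, hi, Or.inr hlt⟩

section CriticalEdge

variable {V : Type*} {E : V → V → Prop} {w : V → V → ℤ}

lemma exists_midpoint_edge (v : ℕ → V) {ℓ : ℕ} (hℓ : 1 ≤ ℓ) (hW : 0 ≤ arcW w v 0 ℓ) :
    ∃ i < ℓ, arcW w v 0 i ≤ arcW w v 0 ℓ / 2 ∧
      arcW w v (i + 1) (ℓ - (i + 1)) ≤ arcW w v 0 ℓ / 2 ∧
      arcW w v 0 i + w (v i) (v (i + 1)) + arcW w v (i + 1) (ℓ - (i + 1)) = arcW w v 0 ℓ := by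
  have hhalf : 0 ≤ arcW w v 0 ℓ / 2 := Int.ediv_nonneg hW two_pos.le
  obtain ⟨i, hiℓ, hpre, hsuf⟩ := exists_last_le (arcW w v 0) (by simpa using hhalf) hℓ
  have hsplit := arcW_add (w := w) v 0 (i + 1) (ℓ - (i + 1))
  simp only [Nat.add_sub_cancel' hiℓ, arcW_succ, zero_add] at hsplit
  refine ⟨i, hiℓ, hpre, ?_, hsplit.symm⟩
  rcases hsuf with rfl | hlt
  · simpa using hhalf
  · rw [arcW_succ, zero_add] at hlt
    omega

lemma exists_critical_edge {d : V → V → WithTop ℤ}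
    (hdle : ∀ u x p, IsWalkFrom E p u x → d u x ≤ (wWeight w p : ℤ))
    (hdach : ∀ u x, (∃ p, IsWalkFrom E p u x) →
      ∃ p, IsWalkFrom E p u x ∧ d u x = (wWeight w p : ℤ))
    {ℓ : ℕ} {v : ℕ → V} (hℓ : 1 ≤ ℓ) (hclosed : v ℓ = v 0) (hedge : ∀ j, E (v j) (v (j + 1)))
    (hW : 0 ≤ arcW w v 0 ℓ) (hmin : ∀ m u, IsSimpleCycle E u m → arcW w v 0 ℓ ≤ arcW w u 0 m) :
    ∃ i, ∃ p q : ℤ, d (v 0) (v i) = p ∧ d (v (i + 1)) (v 0) = q ∧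
      p + w (v i) (v (i + 1)) + q = arcW w v 0 ℓ ∧
      p ≤ arcW w v 0 ℓ / 2 ∧ q ≤ arcW w v 0 ℓ / 2 := by
  obtain ⟨i, hiℓ, hpre, hsuf, hsplit⟩ := exists_midpoint_edge v hℓ hW
  have hPwalk := isWalkFrom_arcWalk hedge 0 i
  have hQwalk := isWalkFrom_arcWalk hedge (i + 1) (ℓ - (i + 1))
  rw [zero_add] at hPwalk
  rw [Nat.add_sub_cancel' hiℓ, hclosed] at hQwalk
  obtain ⟨P, hP, hdP, hPle⟩ := exists_walk_dist_eq hdle hdach hPwalk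
  obtain ⟨Q, hQ, hdQ, hQle⟩ := exists_walk_dist_eq hdle hdach hQwalk
  rw [wWeight_arcWalk] at hPle hQle
  have hlow := le_wWeight_add_wWeight hW hmin hP hQ (hedge i)
  exact ⟨i, _, _, hdP, hdQ, by omega, hPle.trans hpre, hQle.trans hsuf⟩

end CriticalEdge

theorem stmt17_general {V : Type*} (E : V → V → Prop) (w : V → V → ℤ) (M : ℤ)
    (hwb : ∀ p q, E p q → -M ≤ w p q ∧ w p q ≤ M)
    (d : V → V → WithTop ℤ)
    (hdle : ∀ u x p, IsWalkFrom E p u x → d u x ≤ (wWeight w p : ℤ))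
    (hdach : ∀ u x, (∃ p, IsWalkFrom E p u x) →
      ∃ p, IsWalkFrom E p u x ∧ d u x = (wWeight w p : ℤ))
    (ℓ : ℕ) (v : ℕ → V) (hℓ : 1 ≤ ℓ)
    (hper : ∀ j, v (j + ℓ) = v j)
    (hedge : ∀ j, E (v j) (v (j + 1)))
    (hwC : 0 ≤ arcW w v 0 ℓ)
    (hmin : ∀ (m : ℕ) (u : ℕ → V), 1 ≤ m → (∀ j, u (j + m) = u j) →
      (∀ j, E (u j) (u (j + 1))) → (∀ i j, i < m → j < m → u i = u j → i = j) →
      arcW w v 0 ℓ ≤ arcW w u 0 m)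
    (tstar : ℤ)
    (htstar : IsLeast {x : ℤ | ∃ (a b c : V) (p q : ℤ), E b c ∧
      d a b = (p : WithTop ℤ) ∧ d c a = (q : WithTop ℤ) ∧
      p + w b c + q = arcW w v 0 ℓ ∧ x = max p q} tstar) :
    tstar ≤ arcW w v 0 ℓ / 2 ∧ arcW w v 0 ℓ ≤ 2 * tstar + M := by
  constructor
  · obtain ⟨i, p, q, hdp, hdq, hsum, hp, hq⟩ :=
      exists_critical_edge hdle hdach hℓ (by simpa using hper 0) hedge hwC
        fun m u ⟨h1, h2, h3, h4⟩ => hmin m u h1 h2 h3 h4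
    exact (htstar.2 ⟨_, _, _, p, q, hedge i, hdp, hdq, hsum, rfl⟩).trans (max_le hp hq)
  · obtain ⟨a, b, c, p, q, hbc, -, -, hsum, rfl⟩ := htstar.1
    linarith [(hwb b c hbc).2, le_max_left p q, le_max_right p q]

/-- let `G` be a directed graph with integer edge weights in
`{-M, …, M}` and no negative cycles, and `C` (the injective `ℓ`-periodic sequence `v`)
a minimum-weight simple cycle with `wC = arcW w v 0 ℓ ≥ 0`. Let `t*` be the minimum,
over all triples `(a, b, c)` with `(b, c) ∈ E`, `d[a,b] < ∞`, `d[c,a] < ∞` and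
`d[a,b] + w(b,c) + d[c,a] = wC`, of `max(d[a,b], d[c,a])`. Then `t* ≤ ⌊wC/2⌋` and
`wC ≤ 2 t* + M`. Here `d` is the shortest-path distance with values in `ℤ ∪ {∞}`. -/
theorem stmt17 {V : Type*} (E : V → V → Prop) (w : V → V → ℤ) (M : ℤ) (hM : 1 ≤ M)
    (hwb : ∀ p q, E p q → -M ≤ w p q ∧ w p q ≤ M)
    (d : V → V → WithTop ℤ)
    (hdle : ∀ u x p, IsWalkFrom E p u x → d u x ≤ (wWeight w p : ℤ))
    (hdach : ∀ u x, (∃ p, IsWalkFrom E p u x) →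
      ∃ p, IsWalkFrom E p u x ∧ d u x = (wWeight w p : ℤ))
    (ℓ : ℕ) (v : ℕ → V) (hℓ : 1 ≤ ℓ)
    (hper : ∀ j, v (j + ℓ) = v j)
    (hedge : ∀ j, E (v j) (v (j + 1)))
    (hinj : ∀ i j, i < ℓ → j < ℓ → v i = v j → i = j)
    (hwC : 0 ≤ arcW w v 0 ℓ)
    (hmin : ∀ (m : ℕ) (u : ℕ → V), 1 ≤ m → (∀ j, u (j + m) = u j) →
      (∀ j, E (u j) (u (j + 1))) → (∀ i j, i < m → j < m → u i = u j → i = j) →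
      arcW w v 0 ℓ ≤ arcW w u 0 m)
    (tstar : ℤ)
    (htstar : IsLeast {x : ℤ | ∃ (a b c : V) (p q : ℤ), E b c ∧
      d a b = (p : WithTop ℤ) ∧ d c a = (q : WithTop ℤ) ∧
      p + w b c + q = arcW w v 0 ℓ ∧ x = max p q} tstar) :
    tstar ≤ arcW w v 0 ℓ / 2 ∧ arcW w v 0 ℓ ≤ 2 * tstar + M :=
  stmt17_general E w M hwb d hdle hdach ℓ v hℓ hper hedge hwC hmin tstar htstar
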